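/- arXiv:2512.16952 — 5 statements merged into one kernel-verified Lean document; each statement's English description precedes it below -/
import Mathlib

section
/- Let m ≥ 1 and f ∈ H^∞(𝔻). If g ∈ L²_a(𝔻) satisfies T_{z̄^m + f} g = 0 and the first m Taylor coefficients of g at 0 all vanish (i.e., g(0) = g'(0) = ⋯ = g^{(m-1)}(0) = 0), then g ≡ 0. -/
/-!
Testing `T_φ g = 0` against `z ^ k` gives `⟨g, z ^ (m + k)⟩ + ⟨f g, z ^ k⟩ = 0`. Monomials are
orthogonal on discs centred at `0`, so `⟨h, z ^ k⟩` is the `k`-th Taylor coefficient of `h` times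
`‖z ^ k‖²`: expand `h` on smaller discs, where the Taylor series is dominated, and let the radius
tend to `1`. If `g ≢ 0`, it vanishes at `0` to some exact order `n ≥ m`; with `k = n - m < n`
the product `f g` vanishes to order `> k`, so the second term is zero while the first is a
nonzero multiple of the `n`-th coefficient of `g`.
-/

open MeasureTheory Metric Complex

/-- The normalized Lebesgue area measure on the unit disk `𝔻 ⊆ ℂ`. -/
noncomputable def dA : Measure ℂ :=
  (ENNReal.ofReal Real.pi)⁻¹ • (volume.restrict (ball (0 : ℂ) 1))

/-- A function belongs to the Bergman space `L²ₐ(𝔻)`: it is analytic on the unit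
disk and square-integrable with respect to the normalized area measure. -/
def InBergman (f : ℂ → ℂ) : Prop :=
  DifferentiableOn ℂ f (ball (0 : ℂ) 1) ∧ MemLp f 2 dA

/-- `IsToeplitz φ g h` expresses `T_φ g = h`, i.e. `h = P (φ · g)` where `P` is the
Bergman (orthogonal) projection: `h` lies in the Bergman space and `φ g - h` is
orthogonal to every Bergman space function. -/
def IsToeplitz (φ g h : ℂ → ℂ) : Prop :=
  InBergman h ∧ ∀ u : ℂ → ℂ, InBergman u →
    ∫ z, (φ z * g z - h z) * (starRingEnd ℂ) (u z) ∂dA = 0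

/-- `f ∈ H^∞(𝔻)`: bounded and analytic on the unit disk. -/
def BoundedAnalytic (f : ℂ → ℂ) : Prop :=
  DifferentiableOn ℂ f (ball (0 : ℂ) 1) ∧ ∃ C : ℝ, ∀ z ∈ ball (0 : ℂ) 1, ‖f z‖ ≤ C

open Filter Topology ComplexConjugate

theorem setIntegral_ball_comp_circle_mul {E : Type*} [NormedAddCommGroup E] [NormedSpace ℝ E]
    (c : Circle) (F : ℂ → E) (r : ℝ) :
    ∫ z in ball (0 : ℂ) r, F (c * z) = ∫ z in ball (0 : ℂ) r, F z := by
  have hball : rotation c ⁻¹' ball 0 r = ball 0 r := by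
    rw [(rotation c).preimage_ball, map_zero]
  simpa [hball, rotation_apply] using
    (rotation c).measurePreserving.setIntegral_preimage_emb
      (rotation c).toHomeomorph.measurableEmbedding F (ball 0 r)

theorem setIntegral_ball_pow_mul_conj_pow_eq_zpow_mul (c : Circle) (n k : ℕ) (r : ℝ) :
    ∫ z in ball (0 : ℂ) r, z ^ n * conj z ^ k
      = (c : ℂ) ^ ((n : ℤ) - k) * ∫ z in ball (0 : ℂ) r, z ^ n * conj z ^ k := by
  rw [← integral_const_mul, ← setIntegral_ball_comp_circle_mul c]
  congr 1 with z
  rw [map_mul, ← Circle.coe_inv_eq_conj, Circle.coe_inv, zpow_sub₀ (Circle.coe_ne_zero c),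
    zpow_natCast, zpow_natCast]
  ring

theorem setIntegral_ball_pow_mul_conj_pow_of_ne {n k : ℕ} (hnk : n ≠ k) (r : ℝ) :
    ∫ z in ball (0 : ℂ) r, z ^ n * conj z ^ k = 0 := by
  set d : ℤ := n - k
  have hd : (d : ℝ) ≠ 0 := by exact_mod_cast sub_ne_zero.2 (Nat.cast_injective.ne hnk)
  have hc : (Circle.exp (Real.pi / d) : ℂ) ^ d ≠ 1 := by
    rw [← Circle.coe_zpow, ← Circle.exp_intCast_mul, mul_div_cancel₀ _ hd]
    exact fun h => Circle.exp_pi_ne_one (Circle.coe_eq_one.1 h)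
  by_contra hI
  exact hc (mul_right_cancel₀ hI
    ((setIntegral_ball_pow_mul_conj_pow_eq_zpow_mul _ n k r).symm.trans (one_mul _).symm))

theorem setIntegral_ball_pow_mul_conj_pow_self_ne_zero (k : ℕ) {r : ℝ} (hr : 0 < r) :
    ∫ z in ball (0 : ℂ) r, z ^ k * conj z ^ k ≠ 0 := by
  have hreal : ∀ z : ℂ, z ^ k * conj z ^ k = ((normSq z ^ k : ℝ) : ℂ) := fun z => by
    rw [← mul_pow, mul_conj, ofReal_pow]
  rw [funext hreal, integral_complex_ofReal, ofReal_ne_zero]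
  have hint : IntegrableOn (fun z => normSq z ^ k) (ball (0 : ℂ) r) :=
    ((continuous_normSq.pow k).continuousOn.integrableOn_compact
      (isCompact_closedBall 0 r)).mono_set ball_subset_closedBall
  refine ((setIntegral_pos_iff_support_of_nonneg_ae
    (ae_of_all _ fun z => pow_nonneg (normSq_nonneg z) k) hint).2 ?_).ne'
  have hsupp : ball (0 : ℂ) r \ {0} ⊆ Function.support (fun z => normSq z ^ k) ∩ ball 0 r :=
    fun z ⟨hz, hz0⟩ => ⟨pow_ne_zero k (normSq_eq_zero.not.2 hz0), hz⟩
  calc (0 : ENNReal) < volume (ball (0 : ℂ) r \ {0}) := by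
        rw [measure_sdiff_null (measure_singleton 0)]
        exact measure_ball_pos volume 0 hr
    _ ≤ _ := measure_mono hsupp

theorem iUnion_ball_of_monotone_tendsto {X : Type*} [PseudoMetricSpace X] (x : X) {R : ℝ}
    {u : ℕ → ℝ} (hmono : Monotone u) (hu : Tendsto u atTop (𝓝 R)) :
    ⋃ n, ball x (u n) = ball x R := by
  refine subset_antisymm (Set.iUnion_subset fun n => ball_subset_ball (hmono.ge_of_tendsto hu n))
    fun y hy => ?_
  obtain ⟨n, hn⟩ := (hu.eventually (lt_mem_nhds (mem_ball.1 hy))).exists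
  exact Set.mem_iUnion.2 ⟨n, hn⟩

theorem integrableOn_ball_mul_conj_pow {h : ℂ → ℂ} {R : ℝ} (hh : IntegrableOn h (ball 0 R))
    (k : ℕ) :
    IntegrableOn (fun z => h z * conj z ^ k) (ball 0 R) := by
  refine Integrable.mul_bdd (c := R ^ k) hh (by fun_prop) ?_
  rw [ae_restrict_iff' measurableSet_ball]
  refine ae_of_all _ fun z hz => ?_
  rw [norm_pow, RCLike.norm_conj]
  exact pow_le_pow_left₀ (norm_nonneg z) (mem_ball_zero_iff.1 hz).le k

section Taylor

variable {h : ℂ → ℂ} {R r : ℝ}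

theorem summable_norm_factorial_inv_mul_iteratedDeriv_mul_pow
    (hd : DifferentiableOn ℂ h (ball 0 R)) (hr0 : 0 ≤ r) (hr : r < R) :
    Summable fun n => ‖(n.factorial : ℂ)⁻¹ * iteratedDeriv n h 0‖ * r ^ n := by
  have hrR : (r : ℂ) ∈ ball 0 R := by simpa [abs_of_nonneg hr0] using hr
  have hsum := (Complex.hasSum_taylorSeries_on_ball hd hrR).summable
  refine (summable_norm_iff.2 hsum).congr fun n => ?_
  simp only [sub_zero, smul_eq_mul, norm_mul, norm_pow, norm_real, Real.norm_of_nonneg hr0]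
  ring

theorem setIntegral_ball_mul_conj_pow_of_lt (hd : DifferentiableOn ℂ h (ball 0 R))
    (hr : r < R) (k : ℕ) :
    ∫ z in ball (0 : ℂ) r, h z * conj z ^ k
      = (k.factorial : ℂ)⁻¹ * iteratedDeriv k h 0 * ∫ z in ball (0 : ℂ) r, z ^ k * conj z ^ k := by
  rcases le_or_gt r 0 with hr0 | hr0
  · simp [ball_eq_empty.2 hr0]
  set a : ℕ → ℂ := fun n => (n.factorial : ℂ)⁻¹ * iteratedDeriv n h 0
  have hsum : HasSum (fun n => a n * ∫ z in ball (0 : ℂ) r, z ^ n * conj z ^ k)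
      (∫ z in ball (0 : ℂ) r, h z * conj z ^ k) := by
    simp_rw [← integral_const_mul]
    refine hasSum_integral_of_dominated_convergence (fun n _ => ‖a n‖ * r ^ n * r ^ k)
      (fun n => by fun_prop) (fun n => ?_) (ae_of_all _ fun _ =>
        (summable_norm_factorial_inv_mul_iteratedDeriv_mul_pow hd hr0.le hr).mul_right _) ?_ ?_
    · rw [ae_restrict_iff' measurableSet_ball]
      refine ae_of_all _ fun z hz => ?_
      have hz' : ‖z‖ ≤ r := (mem_ball_zero_iff.1 hz).le
      simp only [a, norm_mul, norm_pow, RCLike.norm_conj, mul_assoc]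
      gcongr
    · exact integrableOn_const measure_ball_lt_top.ne
    · rw [ae_restrict_iff' measurableSet_ball]
      refine ae_of_all _ fun z hz => ?_
      have := (Complex.hasSum_taylorSeries_on_ball hd (ball_subset_ball hr.le hz)).mul_right
        (conj z ^ k)
      simpa [a, mul_assoc, mul_comm, mul_left_comm] using this
  exact hsum.unique (hasSum_single k fun n hn => by
    rw [setIntegral_ball_pow_mul_conj_pow_of_ne hn, mul_zero])

theorem setIntegral_ball_mul_conj_pow (hd : DifferentiableOn ℂ h (ball 0 R))
    (hi : IntegrableOn h (ball 0 R)) (k : ℕ) :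
    ∫ z in ball (0 : ℂ) R, h z * conj z ^ k
      = (k.factorial : ℂ)⁻¹ * iteratedDeriv k h 0 * ∫ z in ball (0 : ℂ) R, z ^ k * conj z ^ k := by
  obtain ⟨u, hmono, hlt, hu⟩ := exists_seq_strictMono_tendsto R
  have hlim {F : ℂ → ℂ} (hF : IntegrableOn F (ball 0 R)) :
      Tendsto (fun n => ∫ z in ball 0 (u n), F z) atTop (𝓝 (∫ z in ball 0 R, F z)) := by
    rw [← iUnion_ball_of_monotone_tendsto 0 hmono.monotone hu] at hF ⊢
    exact tendsto_setIntegral_of_monotone (fun _ => measurableSet_ball)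
      (fun _ _ hij => ball_subset_ball (hmono.monotone hij)) hF
  have hpow : IntegrableOn (fun z : ℂ => z ^ k) (ball 0 R) :=
    ((continuous_pow k).continuousOn.integrableOn_compact
      (isCompact_closedBall 0 R)).mono_set ball_subset_closedBall
  refine tendsto_nhds_unique (hlim (integrableOn_ball_mul_conj_pow hi k)) ?_
  simp_rw [setIntegral_ball_mul_conj_pow_of_lt hd (hlt _) k]
  exact (hlim (integrableOn_ball_mul_conj_pow hpow k)).const_mul _

end Taylor

theorem integral_dA {E : Type*} [NormedAddCommGroup E] [NormedSpace ℝ E] (F : ℂ → E) :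
    ∫ z, F z ∂dA = Real.pi⁻¹ • ∫ z in ball (0 : ℂ) 1, F z := by
  rw [dA, integral_smul_measure, ENNReal.toReal_inv, ENNReal.toReal_ofReal Real.pi_pos.le]

theorem ofReal_pi_inv_ne_top : (ENNReal.ofReal Real.pi)⁻¹ ≠ ⊤ :=
  ENNReal.inv_ne_top.2 (ENNReal.ofReal_pos.2 Real.pi_pos).ne'

instance : IsFiniteMeasure dA :=
  have : IsFiniteMeasure (volume.restrict (ball (0 : ℂ) 1)) :=
    isFiniteMeasure_restrict.2 measure_ball_lt_top.ne
  Measure.smul_finite _ ofReal_pi_inv_ne_top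

theorem InBergman.integrableOn {g : ℂ → ℂ} (hg : InBergman g) : IntegrableOn g (ball 0 1) :=
  (integrable_smul_measure (ENNReal.inv_ne_zero.2 ENNReal.ofReal_ne_top)
    ofReal_pi_inv_ne_top).1 (hg.2.integrable one_le_two)

theorem inBergman_pow (k : ℕ) : InBergman (· ^ k) := by
  refine ⟨(differentiable_pow k).differentiableOn, MemLp.of_bound (by fun_prop) 1 ?_⟩
  refine Measure.ae_smul_measure ((ae_restrict_iff' measurableSet_ball).2 (ae_of_all _ ?_)) _
  intro z hz
  rw [norm_pow]
  exact pow_le_one₀ (norm_nonneg z) (mem_ball_zero_iff.1 hz).le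

theorem IsToeplitz.setIntegral_mul_conj_pow_eq_zero {φ g : ℂ → ℂ} (hT : IsToeplitz φ g 0)
    (k : ℕ) : ∫ z in ball (0 : ℂ) 1, φ z * g z * conj z ^ k = 0 := by
  simpa only [Pi.zero_apply, sub_zero, map_pow, integral_dA, smul_eq_zero, inv_eq_zero,
    Real.pi_ne_zero, false_or] using hT.2 _ (inBergman_pow k)

theorem BoundedAnalytic.integrableOn_mul {f g : ℂ → ℂ} (hf : BoundedAnalytic f)
    (hg : IntegrableOn g (ball 0 1)) : IntegrableOn (f * g) (ball 0 1) := by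
  obtain ⟨hfd, C, hC⟩ := hf
  exact Integrable.bdd_mul (c := C) hg (hfd.continuousOn.aestronglyMeasurable measurableSet_ball)
    ((ae_restrict_iff' measurableSet_ball).2 (ae_of_all _ hC))

theorem iteratedDeriv_mul_eq_zero_of_lt_analyticOrderAt {𝕜 : Type*} [NontriviallyNormedField 𝕜]
    [CharZero 𝕜] [CompleteSpace 𝕜] {f g : 𝕜 → 𝕜} {z₀ : 𝕜} (hf : AnalyticAt 𝕜 f z₀)
    (hg : AnalyticAt 𝕜 g z₀) {k : ℕ} (hk : (k : ℕ∞) < analyticOrderAt g z₀) :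
    iteratedDeriv k (f * g) z₀ = 0 := by
  refine (natCast_le_analyticOrderAt_iff_iteratedDeriv_eq_zero (n := k + 1) (hf.mul hg)).1 ?_ k
    k.lt_succ_self
  rw [analyticOrderAt_mul hf hg, Nat.cast_add_one]
  exact (Order.add_one_le_of_lt hk).trans le_add_self

theorem IsToeplitz.setIntegral_conj_pow_add_eq_zero {m : ℕ} {f g : ℂ → ℂ}
    (hker : IsToeplitz (fun z => conj z ^ m + f z) g 0) (hf : BoundedAnalytic f)
    (hg : InBergman g) (k : ℕ) :
    (∫ z in ball (0 : ℂ) 1, g z * conj z ^ (m + k))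
      + ∫ z in ball (0 : ℂ) 1, (f * g) z * conj z ^ k = 0 := by
  rw [← integral_add (integrableOn_ball_mul_conj_pow hg.integrableOn _)
    (integrableOn_ball_mul_conj_pow (hf.integrableOn_mul hg.integrableOn) k)]
  refine (setIntegral_congr_fun measurableSet_ball fun w _ => ?_).trans
    (hker.setIntegral_mul_conj_pow_eq_zero k)
  simp only [Pi.mul_apply]
  ring

theorem toeplitz_kernel_trivial_of_vanishing_jet (m : ℕ) (hm : 1 ≤ m)
    (f g : ℂ → ℂ) (hf : BoundedAnalytic f) (hg : InBergman g)
    (hker : IsToeplitz (fun z => (starRingEnd ℂ) z ^ m + f z) g 0)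
    (hg0 : ∀ j < m, iteratedDeriv j g 0 = 0) :
    ∀ z ∈ ball (0 : ℂ) 1, g z = 0 := by
  have h0 : (0 : ℂ) ∈ ball 0 1 := mem_ball_self one_pos
  have hgA := hg.1.analyticOnNhd isOpen_ball
  intro z hz
  by_contra hgz
  obtain ⟨n, hn⟩ := ENat.ne_top_iff_exists.1 fun htop => hgz <|
    hgA.eqOn_zero_of_preconnected_of_eventuallyEq_zero (convex_ball 0 1).isPreconnected h0
      (analyticOrderAt_eq_top.1 htop) hz
  obtain ⟨k, rfl⟩ : ∃ k, n = m + k := Nat.exists_eq_add_of_le <| by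
    exact_mod_cast hn ▸ (natCast_le_analyticOrderAt_iff_iteratedDeriv_eq_zero (hgA 0 h0)).2 hg0
  have hgn := ((analyticOrderAt_eq_nat_iff_iteratedDeriv_eq_zero (hgA 0 h0)).1 hn.symm).2
  have hfgk : iteratedDeriv k (f * g) 0 = 0 :=
    iteratedDeriv_mul_eq_zero_of_lt_analyticOrderAt (hf.1.analyticOnNhd isOpen_ball 0 h0)
      (hgA 0 h0) (hn ▸ by exact_mod_cast (by omega : k < m + k))
  have horth := hker.setIntegral_conj_pow_add_eq_zero hf hg k
  rw [setIntegral_ball_mul_conj_pow hg.1 hg.integrableOn, setIntegral_ball_mul_conj_pow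
    (hf.1.mul hg.1) (hf.integrableOn_mul hg.integrableOn), hfgk] at horth
  simp only [mul_zero, zero_mul, add_zero, mul_eq_zero, inv_eq_zero, Nat.cast_eq_zero] at horth
  exact horth.elim (·.elim (Nat.factorial_ne_zero _) hgn)
    (setIntegral_ball_pow_mul_conj_pow_self_ne_zero _ one_pos)
end

section
/- For m ≥ 1, n ≥ 0, j with 0 ≤ j ≤ m−1, and c ∈ ℂ, the series Σ_{k≥1} |c|^{2k} (Π_{i=1}^k (i(m+n)+1+j)²/(i n + (i−1)m + 1 + j)²) · 1/(k(m+n)+1) converges if |c| < 1 and diverges if |c| ≥ 1. -/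
open MeasureTheory Metric Complex

/-!
Writing `Dᵢ = i n + (i - 1) m + 1 + j`, the `i`-th factor of the product is `(1 + m / Dᵢ)²`.
It is at least `1`, and since `Dᵢ ≥ i`, Bernoulli's inequality bounds it by `(1 + 1/i)^(2m)`;
these bounds telescope, so the `k`-th product lies between `1` and `(k + 1)^(2m)`.
Hence the series is dominated by a multiple of `Σ k^(2m) |c|^(2k)` when `|c| < 1`, and
dominates a multiple of the harmonic series when `|c| ≥ 1`.
-/

open Finset

lemma one_add_div_le_one_add_inv_pow {x D : ℝ} (hx : 0 < x) (hxD : x ≤ D) (m : ℕ) :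
    1 + m / D ≤ (1 + x⁻¹) ^ m :=
  calc 1 + m / D ≤ 1 + m * x⁻¹ := by
        rw [div_eq_mul_inv]; gcongr
    _ ≤ (1 + x⁻¹) ^ m := one_add_mul_le_pow (by linarith [inv_pos.2 hx]) m

noncomputable def bergmanRatio (m n j i : ℕ) : ℝ :=
  ((i * (m + n) + 1 + j : ℕ) : ℝ) ^ 2 / ((i * n + (i - 1) * m + 1 + j : ℕ) : ℝ) ^ 2

noncomputable def bergmanNormTerm (m n j : ℕ) (r : ℝ) (k : ℕ) : ℝ :=
  r ^ (2 * (k + 1)) * (∏ i ∈ Icc 1 (k + 1), bergmanRatio m n j i) *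
    (1 / (((k + 1) * (m + n) + 1 : ℕ) : ℝ))

section

variable {m n j i : ℕ}

lemma bergmanRatio_eq_one_add_div_sq (hi : 1 ≤ i) :
    bergmanRatio m n j i = (1 + m / ((i * n + (i - 1) * m + 1 + j : ℕ) : ℝ)) ^ 2 := by
  have hnum : i * (m + n) + 1 + j = (i * n + (i - 1) * m + 1 + j) + m := by
    obtain ⟨i, rfl⟩ := Nat.exists_eq_add_of_le' hi
    simp only [Nat.add_sub_cancel]
    ring
  have hD : ((i * n + (i - 1) * m + 1 + j : ℕ) : ℝ) ≠ 0 := by positivity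
  rw [bergmanRatio, hnum, Nat.cast_add, ← div_pow, add_div, div_self hD]

lemma one_le_bergmanRatio (hi : 1 ≤ i) : 1 ≤ bergmanRatio m n j i := by
  rw [bergmanRatio_eq_one_add_div_sq hi]
  exact one_le_pow₀ (le_add_of_nonneg_right (by positivity))

lemma bergmanRatio_le (hm : 1 ≤ m) (hi : 1 ≤ i) :
    bergmanRatio m n j i ≤ (1 + (i : ℝ)⁻¹) ^ (2 * m) := by
  have hiD : i ≤ i * n + (i - 1) * m + 1 + j := by
    have : i - 1 ≤ (i - 1) * m := Nat.le_mul_of_pos_right _ hm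
    omega
  rw [bergmanRatio_eq_one_add_div_sq hi, mul_comm 2 m, pow_mul]
  gcongr
  exact one_add_div_le_one_add_inv_pow (by positivity) (by exact_mod_cast hiD) m

lemma one_le_prod_bergmanRatio (K : ℕ) : 1 ≤ ∏ i ∈ Icc 1 K, bergmanRatio m n j i :=
  one_le_prod fun _ hi => one_le_bergmanRatio (mem_Icc.1 hi).1

lemma prod_bergmanRatio_le (hm : 1 ≤ m) (K : ℕ) :
    ∏ i ∈ Icc 1 K, bergmanRatio m n j i ≤ ((K : ℝ) + 1) ^ (2 * m) := by
  induction K with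
  | zero => simp
  | succ K ih =>
    rw [prod_Icc_succ_top (by omega)]
    have htelescope : ((K : ℝ) + 1) * (1 + ((K + 1 : ℕ) : ℝ)⁻¹) = (K + 1 : ℕ) + 1 := by
      push_cast; field_simp
    calc (∏ i ∈ Icc 1 K, bergmanRatio m n j i) * bergmanRatio m n j (K + 1)
        ≤ ((K : ℝ) + 1) ^ (2 * m) * (1 + ((K + 1 : ℕ) : ℝ)⁻¹) ^ (2 * m) :=
          mul_le_mul ih (bergmanRatio_le hm (by omega))
            (zero_le_one.trans (one_le_bergmanRatio (by omega))) (by positivity)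
      _ = (((K + 1 : ℕ) : ℝ) + 1) ^ (2 * m) := by rw [← mul_pow, htelescope]

end

section

variable {m n j : ℕ} {r : ℝ}

lemma bergmanNormTerm_nonneg (k : ℕ) : 0 ≤ bergmanNormTerm m n j r k := by
  have := one_le_prod_bergmanRatio (m := m) (n := n) (j := j) (k + 1)
  unfold bergmanNormTerm
  rw [pow_mul]
  positivity

lemma bergmanNormTerm_le (hm : 1 ≤ m) (k : ℕ) :
    bergmanNormTerm m n j r k ≤ 2 ^ (2 * m) * (((k + 1 : ℕ) : ℝ) ^ (2 * m) * (r ^ 2) ^ (k + 1)) := by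
  have hprod : ∏ i ∈ Icc 1 (k + 1), bergmanRatio m n j i ≤ (2 * ((k : ℝ) + 1)) ^ (2 * m) :=
    (prod_bergmanRatio_le hm (k + 1)).trans (by gcongr; push_cast; linarith)
  have hinv : 1 / (((k + 1) * (m + n) + 1 : ℕ) : ℝ) ≤ 1 :=
    div_le_one_of_le₀ (by exact_mod_cast Nat.le_add_left 1 _) (by positivity)
  calc bergmanNormTerm m n j r k
      ≤ (r ^ 2) ^ (k + 1) * (2 * ((k : ℝ) + 1)) ^ (2 * m) * 1 := by
        unfold bergmanNormTerm
        rw [pow_mul]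
        gcongr
    _ = 2 ^ (2 * m) * (((k + 1 : ℕ) : ℝ) ^ (2 * m) * (r ^ 2) ^ (k + 1)) := by
        rw [mul_pow]; push_cast; ring

lemma inv_mul_one_div_le_bergmanNormTerm (hr : 1 ≤ |r|) (k : ℕ) :
    ((m + n + 1 : ℕ) : ℝ)⁻¹ * (1 / ((k : ℝ) + 1)) ≤ bergmanNormTerm m n j r k := by
  have hpow : 1 ≤ r ^ (2 * (k + 1)) := by
    rw [pow_mul, ← sq_abs]
    exact one_le_pow₀ (one_le_pow₀ hr)
  have hden : (((k + 1) * (m + n) + 1 : ℕ) : ℝ) ≤ ((m + n + 1 : ℕ) : ℝ) * ((k : ℝ) + 1) := by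
    have : (k + 1) * (m + n) + 1 ≤ (m + n + 1) * (k + 1) := by nlinarith
    exact_mod_cast this
  calc ((m + n + 1 : ℕ) : ℝ)⁻¹ * (1 / ((k : ℝ) + 1))
      = 1 / (((m + n + 1 : ℕ) : ℝ) * ((k : ℝ) + 1)) := by rw [one_div, one_div, mul_inv]
    _ ≤ 1 * 1 * (1 / (((k + 1) * (m + n) + 1 : ℕ) : ℝ)) := by
        rw [one_mul, one_mul]; gcongr
    _ ≤ bergmanNormTerm m n j r k := by
        unfold bergmanNormTerm
        gcongr
        exact one_le_prod_bergmanRatio _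

lemma summable_bergmanNormTerm (hm : 1 ≤ m) (hr : |r| < 1) :
    Summable (bergmanNormTerm m n j r) := by
  have hr2 : ‖r ^ 2‖ < 1 := by
    rw [norm_pow, Real.norm_eq_abs]
    exact pow_lt_one₀ (abs_nonneg r) hr two_ne_zero
  have hgeom : Summable fun k : ℕ => ((k + 1 : ℕ) : ℝ) ^ (2 * m) * (r ^ 2) ^ (k + 1) :=
    (summable_nat_add_iff (f := fun k : ℕ => (k : ℝ) ^ (2 * m) * (r ^ 2) ^ k) 1).2
      (summable_pow_mul_geometric_of_norm_lt_one (2 * m) hr2)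
  exact .of_nonneg_of_le bergmanNormTerm_nonneg (bergmanNormTerm_le hm) (hgeom.mul_left _)

lemma not_summable_bergmanNormTerm (hr : 1 ≤ |r|) :
    ¬ Summable (bergmanNormTerm m n j r) := by
  intro hsum
  have hharmonic : Summable fun k : ℕ => 1 / ((k : ℝ) + 1) := by
    have := (Summable.of_nonneg_of_le (fun _ => by positivity)
      (inv_mul_one_div_le_bergmanNormTerm hr) hsum).mul_left ((m + n + 1 : ℕ) : ℝ)
    refine this.congr fun k => ?_
    rw [← mul_assoc, mul_inv_cancel₀ (by positivity), one_mul]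
  refine Real.not_summable_one_div_natCast ((summable_nat_add_iff 1).1 ?_)
  simpa using hharmonic

end

theorem bergman_norm_series_summable_iff_general (m n j : ℕ) (hm : 1 ≤ m)
    (c : ℂ) :
    (‖c‖ < 1 → Summable (fun k : ℕ =>
      ‖c‖ ^ (2 * (k + 1)) *
        (∏ i ∈ Finset.Icc 1 (k + 1),
          ((i * (m + n) + 1 + j : ℕ) : ℝ) ^ 2 /
            ((i * n + (i - 1) * m + 1 + j : ℕ) : ℝ) ^ 2) *
        (1 / (((k + 1) * (m + n) + 1 : ℕ) : ℝ)))) ∧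
    (1 ≤ ‖c‖ → ¬ Summable (fun k : ℕ =>
      ‖c‖ ^ (2 * (k + 1)) *
        (∏ i ∈ Finset.Icc 1 (k + 1),
          ((i * (m + n) + 1 + j : ℕ) : ℝ) ^ 2 /
            ((i * n + (i - 1) * m + 1 + j : ℕ) : ℝ) ^ 2) *
        (1 / (((k + 1) * (m + n) + 1 : ℕ) : ℝ)))) :=
  ⟨fun hc => summable_bergmanNormTerm hm ((abs_norm c).trans_lt hc),
    fun hc => not_summable_bergmanNormTerm (hc.trans (abs_norm c).ge)⟩

theorem bergman_norm_series_summable_iff (m n j : ℕ) (hm : 1 ≤ m) (hj : j ≤ m - 1)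
    (c : ℂ) :
    (‖c‖ < 1 → Summable (fun k : ℕ =>
      ‖c‖ ^ (2 * (k + 1)) *
        (∏ i ∈ Finset.Icc 1 (k + 1),
          ((i * (m + n) + 1 + j : ℕ) : ℝ) ^ 2 /
            ((i * n + (i - 1) * m + 1 + j : ℕ) : ℝ) ^ 2) *
        (1 / (((k + 1) * (m + n) + 1 : ℕ) : ℝ)))) ∧
    (1 ≤ ‖c‖ → ¬ Summable (fun k : ℕ =>
      ‖c‖ ^ (2 * (k + 1)) *
        (∏ i ∈ Finset.Icc 1 (k + 1),
          ((i * (m + n) + 1 + j : ℕ) : ℝ) ^ 2 /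
            ((i * n + (i - 1) * m + 1 + j : ℕ) : ℝ) ^ 2) *
        (1 / (((k + 1) * (m + n) + 1 : ℕ) : ℝ)))) :=
  bergman_norm_series_summable_iff_general m n j hm c
end

section
/- Let α, β ∈ ℂ with α ≠ 0. The polynomial p(z) = α z² + β z + 1 has no zeros in the closed unit disk if and only if |α| < 1 and 1 − |α|² > |α β̄ − β|. -/
/-! With `α = s₁ s₂` and `β = -(s₁ + s₂)` the polynomial factors as `(1 - s₁ z)(1 - s₂ z)`, so it has
no zeros in the closed unit disk iff `‖s₁‖ < 1` and `‖s₂‖ < 1`. In these coordinates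
`α β̄ - β = (1 - ‖s₂‖²) s₁ + (1 - ‖s₁‖²) s₂`, and writing `x = ‖s₁‖`, `y = ‖s₂‖`, the triangle
inequality bounds its norm from above by `(x + y)(1 - x y)` when `x, y ≤ 1` and from below by the
same quantity when `y ≤ 1 ≤ x`; comparing with `1 - x²y² = (1 + x y)(1 - x y)` reduces everything
to `1 + x y - (x + y) = (1 - x)(1 - y)`. -/

open Polynomial in
theorem IsAlgClosed.exists_eq_mul_and_eq_neg_add {K : Type*} [Field K] [IsAlgClosed K] (c b : K) :
    ∃ s₁ s₂ : K, c = s₁ * s₂ ∧ b = -(s₁ + s₂) := by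
  obtain ⟨s, hs⟩ := IsAlgClosed.exists_root (C 1 * X ^ 2 + C b * X + C c)
    (by rw [degree_quadratic one_ne_zero]; decide)
  simp only [IsRoot, eval_add, eval_mul, eval_pow, eval_C, eval_X] at hs
  exact ⟨s, -b - s, by linear_combination hs, by ring⟩

theorem forall_norm_le_one_mul_ne_one_iff {𝕜 : Type*} [NormedDivisionRing 𝕜] (s : 𝕜) :
    (∀ z : 𝕜, ‖z‖ ≤ 1 → s * z ≠ 1) ↔ ‖s‖ < 1 := by
  refine ⟨fun h => ?_, fun hs z hz hsz => ?_⟩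
  · by_contra! hs
    have hs0 : s ≠ 0 := norm_pos_iff.mp (one_pos.trans_le hs)
    exact h s⁻¹ (by rw [norm_inv]; exact inv_le_one_of_one_le₀ hs) (mul_inv_cancel₀ hs0)
  · have : ‖s * z‖ < 1 := by
      rw [norm_mul]; exact mul_lt_one_of_nonneg_of_lt_one_left (norm_nonneg s) hs hz
    simp [hsz] at this

section NormedSpace

variable {E : Type*} [SeminormedAddCommGroup E] [NormedSpace ℝ E]

theorem norm_smul_add_smul_le_of_norm_le_one {u v : E} (hu : ‖u‖ ≤ 1) (hv : ‖v‖ ≤ 1) :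
    ‖(1 - ‖v‖ ^ 2) • u + (1 - ‖u‖ ^ 2) • v‖ ≤ (‖u‖ + ‖v‖) * (1 - ‖u‖ * ‖v‖) := by
  have hu2 : 0 ≤ 1 - ‖u‖ ^ 2 := by nlinarith [norm_nonneg u]
  have hv2 : 0 ≤ 1 - ‖v‖ ^ 2 := by nlinarith [norm_nonneg v]
  calc ‖(1 - ‖v‖ ^ 2) • u + (1 - ‖u‖ ^ 2) • v‖
      ≤ (1 - ‖v‖ ^ 2) * ‖u‖ + (1 - ‖u‖ ^ 2) * ‖v‖ := by
        refine (norm_add_le _ _).trans_eq ?_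
        rw [norm_smul, norm_smul, Real.norm_of_nonneg hu2, Real.norm_of_nonneg hv2]
    _ = (‖u‖ + ‖v‖) * (1 - ‖u‖ * ‖v‖) := by ring

theorem le_norm_smul_add_smul_of_norm_le_one_le_norm {u v : E} (hu : 1 ≤ ‖u‖) (hv : ‖v‖ ≤ 1) :
    (‖u‖ + ‖v‖) * (1 - ‖u‖ * ‖v‖) ≤ ‖(1 - ‖v‖ ^ 2) • u + (1 - ‖u‖ ^ 2) • v‖ := by
  have hu2 : 1 - ‖u‖ ^ 2 ≤ 0 := by nlinarith
  have hv2 : 0 ≤ 1 - ‖v‖ ^ 2 := by nlinarith [norm_nonneg v]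
  calc (‖u‖ + ‖v‖) * (1 - ‖u‖ * ‖v‖)
      = (1 - ‖v‖ ^ 2) * ‖u‖ - (‖u‖ ^ 2 - 1) * ‖v‖ := by ring
    _ ≤ ‖(1 - ‖v‖ ^ 2) • u + (1 - ‖u‖ ^ 2) • v‖ := by
        refine le_of_eq_of_le ?_ (norm_sub_le_norm_add _ _)
        rw [norm_smul, norm_smul, Real.norm_of_nonneg hv2, Real.norm_of_nonpos hu2, neg_sub]

theorem one_sub_sq_le_norm_smul_add_smul_of_one_le_norm {u v : E} (hu : 1 ≤ ‖u‖) (huv : ‖u‖ * ‖v‖ < 1) :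
    1 - (‖u‖ * ‖v‖) ^ 2 ≤ ‖(1 - ‖v‖ ^ 2) • u + (1 - ‖u‖ ^ 2) • v‖ := by
  have hv : ‖v‖ < 1 := by nlinarith [norm_nonneg v]
  refine le_trans ?_ (le_norm_smul_add_smul_of_norm_le_one_le_norm hu hv.le)
  nlinarith [mul_nonneg (sub_nonneg.mpr hu) (sub_nonneg.mpr hv.le)]

theorem norm_lt_one_and_norm_lt_one_iff (u v : E) :
    ‖u‖ < 1 ∧ ‖v‖ < 1 ↔
      ‖u‖ * ‖v‖ < 1 ∧ ‖(1 - ‖v‖ ^ 2) • u + (1 - ‖u‖ ^ 2) • v‖ < 1 - (‖u‖ * ‖v‖) ^ 2 := by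
  constructor
  · rintro ⟨hu, hv⟩
    have huv : ‖u‖ * ‖v‖ < 1 := mul_lt_one_of_nonneg_of_lt_one_left (norm_nonneg u) hu hv.le
    refine ⟨huv, (norm_smul_add_smul_le_of_norm_le_one hu.le hv.le).trans_lt ?_⟩
    nlinarith [mul_pos (sub_pos.mpr hu) (sub_pos.mpr hv)]
  · rintro ⟨huv, hlt⟩
    refine ⟨not_le.mp fun hu => ?_, not_le.mp fun hv => ?_⟩
    · exact (one_sub_sq_le_norm_smul_add_smul_of_one_le_norm hu huv).not_gt hlt
    · rw [mul_comm] at huv hlt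
      rw [add_comm] at hlt
      exact (one_sub_sq_le_norm_smul_add_smul_of_one_le_norm hv huv).not_gt hlt

end NormedSpace

theorem RCLike.mul_mul_conj_neg_add_sub_neg_add {𝕜 : Type*} [RCLike 𝕜] (a b : 𝕜) :
    a * b * starRingEnd 𝕜 (-(a + b)) - -(a + b) = (1 - ‖b‖ ^ 2) • a + (1 - ‖a‖ ^ 2) • b := by
  simp only [RCLike.real_smul_eq_coe_mul, map_neg, map_add]
  push_cast
  linear_combination -(b * RCLike.mul_conj a) - a * RCLike.mul_conj b

theorem schur_cohn_quadratic_no_zeros_iff_general (α β : ℂ) :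
    (∀ z : ℂ, ‖z‖ ≤ 1 → α * z ^ 2 + β * z + 1 ≠ 0) ↔
      (‖α‖ < 1 ∧ ‖α * (starRingEnd ℂ) β - β‖ < 1 - ‖α‖ ^ 2) := by
  obtain ⟨s₁, s₂, rfl, rfl⟩ := IsAlgClosed.exists_eq_mul_and_eq_neg_add α β
  have hfactor : ∀ z : ℂ, s₁ * s₂ * z ^ 2 + -(s₁ + s₂) * z + 1 = (1 - s₁ * z) * (1 - s₂ * z) :=
    fun z => by ring
  calc (∀ z : ℂ, ‖z‖ ≤ 1 → s₁ * s₂ * z ^ 2 + -(s₁ + s₂) * z + 1 ≠ 0)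
      ↔ (∀ z : ℂ, ‖z‖ ≤ 1 → s₁ * z ≠ 1) ∧ (∀ z : ℂ, ‖z‖ ≤ 1 → s₂ * z ≠ 1) := by
        simp only [hfactor, ne_eq, mul_eq_zero, sub_eq_zero, not_or, imp_and, forall_and,
          eq_comm (a := (1 : ℂ))]
    _ ↔ ‖s₁‖ < 1 ∧ ‖s₂‖ < 1 := by
        rw [forall_norm_le_one_mul_ne_one_iff, forall_norm_le_one_mul_ne_one_iff]
    _ ↔ _ := by
        rw [norm_lt_one_and_norm_lt_one_iff, RCLike.mul_mul_conj_neg_add_sub_neg_add, norm_mul]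

theorem schur_cohn_quadratic_no_zeros_iff (α β : ℂ) (ha : α ≠ 0) :
    (∀ z : ℂ, ‖z‖ ≤ 1 → α * z ^ 2 + β * z + 1 ≠ 0) ↔
      (‖α‖ < 1 ∧ ‖α * (starRingEnd ℂ) β - β‖ < 1 - ‖α‖ ^ 2) :=
  schur_cohn_quadratic_no_zeros_iff_general α β
end

section
/- Let α, β, γ ∈ ℂ with α ≠ 0, and suppose |α| ≠ |γ| and (|α|² − |γ|²)² ≠ |α β̄ − β γ̄|². Then the number of zeros of p(z) = α z² + β z + γ inside the open unit disk 𝔻 equals 2 − N(1, |α|² − |γ|², (|α|² − |γ|²)² − |α β̄ − β γ̄|²), where N(a₀, a₁, a₂) is the number of sign changes in the sequence (a₀, a₁, a₂). -/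
/-!
Write `p = α (X - z₁) (X - z₂)`. Then `|α|² - |γ|² = |α|² (1 - |z₁|²|z₂|²)` and
`(|α|² - |γ|²)² - |αβ̄ - βγ̄|² = |α|⁴ (|z₁|² - 1)(|z₂|² - 1) |z₁z̄₂ - 1|²`.
The second quantity is negative exactly when one root lies inside the disk and one outside;
when it is positive, the roots lie on the same side of the circle and the sign of the first
quantity decides which side.
-/

open Polynomial ComplexConjugate

theorem Polynomial.exists_roots_quadratic_eq_pair {K : Type*} [Field K] [IsAlgClosed K]
    {a b c : K} (ha : a ≠ 0) : ∃ x y, (C a * X ^ 2 + C b * X + C c).roots = {x, y} :=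
  Multiset.card_eq_two.1 <| IsAlgClosed.card_roots_eq_natDegree.trans (natDegree_quadratic ha)

theorem Multiset.countP_pair {α : Type*} (p : α → Prop) [DecidablePred p] (a b : α) :
    countP p {a, b} = (if p a then 1 else 0) + (if p b then 1 else 0) := by
  rw [insert_eq_cons, countP_cons, ← cons_zero, countP_cons, countP_zero, zero_add, add_comm]

theorem Complex.norm_sq_sub_norm_mul_mul_sq (α z₁ z₂ : ℂ) :
    ‖α‖ ^ 2 - ‖α * z₁ * z₂‖ ^ 2 = ‖α‖ ^ 2 * (1 - ‖z₁‖ ^ 2 * ‖z₂‖ ^ 2) := by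
  simp only [norm_mul]
  ring

theorem Complex.schurCohn_quadratic_discriminant_eq (α z₁ z₂ : ℂ) :
    (‖α‖ ^ 2 - ‖α * z₁ * z₂‖ ^ 2) ^ 2 -
        ‖α * conj (-α * (z₁ + z₂)) - -α * (z₁ + z₂) * conj (α * z₁ * z₂)‖ ^ 2 =
      (‖α‖ ^ 2) ^ 2 * ((‖z₁‖ ^ 2 - 1) * (‖z₂‖ ^ 2 - 1)) * ‖z₁ * conj z₂ - 1‖ ^ 2 := by
  apply Complex.ofReal_injective
  push_cast
  simp only [← Complex.mul_conj', map_mul, map_sub, map_add, map_neg, map_one,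
    Complex.conj_conj]
  ring

/-- `N(1, a, b)`, the number of sign changes in the sequence `1, a, b`. -/
noncomputable def signChanges (a b : ℝ) : ℕ :=
  (if a < 0 then 1 else 0) + (if a * b < 0 then 1 else 0)

section signChanges

variable {a b : ℝ}

theorem signChanges_of_pos_of_pos (ha : 0 < a) (hb : 0 < b) : signChanges a b = 0 := by
  simp [signChanges, ha.le, (mul_pos ha hb).le]

theorem signChanges_of_neg_of_pos (ha : a < 0) (hb : 0 < b) : signChanges a b = 2 := by
  simp [signChanges, ha, mul_neg_of_neg_of_pos ha hb]

theorem signChanges_of_ne_zero_of_neg (ha : a ≠ 0) (hb : b < 0) : signChanges a b = 1 := by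
  rcases ha.lt_or_gt with ha | ha
  · simp [signChanges, ha, (mul_pos_of_neg_of_neg ha hb).le]
  · simp [signChanges, ha.le, mul_neg_of_pos_of_neg ha hb]

end signChanges

theorem ite_lt_one_add_ite_lt_one_eq_two_sub_signChanges {A u v W : ℝ} (hA : 0 < A)
    (hu : 0 ≤ u) (hW : 0 ≤ W) (hn : A * (1 - u * v) ≠ 0)
    (hd : A ^ 2 * ((u - 1) * (v - 1)) * W ≠ 0) :
    ((if u < 1 then 1 else 0) + (if v < 1 then 1 else 0) : ℕ) =
      2 - signChanges (A * (1 - u * v)) (A ^ 2 * ((u - 1) * (v - 1)) * W) := by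
  have hAW : 0 < A ^ 2 * W := mul_pos (by positivity) (hW.lt_of_ne' (right_ne_zero_of_mul hd))
  have huv : (u - 1) * (v - 1) ≠ 0 := right_ne_zero_of_mul (left_ne_zero_of_mul hd)
  rw [show A ^ 2 * ((u - 1) * (v - 1)) * W = (u - 1) * (v - 1) * (A ^ 2 * W) by ring]
  rcases (sub_ne_zero.1 (left_ne_zero_of_mul huv)).lt_or_gt with hu1 | hu1 <;>
    rcases (sub_ne_zero.1 (right_ne_zero_of_mul huv)).lt_or_gt with hv1 | hv1
  · rw [if_pos hu1, if_pos hv1, signChanges_of_pos_of_pos (mul_pos hA (by nlinarith))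
      (mul_pos (mul_pos_of_neg_of_neg (by linarith) (by linarith)) hAW)]
  · rw [if_pos hu1, if_neg hv1.not_gt, signChanges_of_ne_zero_of_neg hn
      (mul_neg_of_neg_of_pos (mul_neg_of_neg_of_pos (by linarith) (by linarith)) hAW)]
  · rw [if_neg hu1.not_gt, if_pos hv1, signChanges_of_ne_zero_of_neg hn
      (mul_neg_of_neg_of_pos (mul_neg_of_pos_of_neg (by linarith) (by linarith)) hAW)]
  · rw [if_neg hu1.not_gt, if_neg hv1.not_gt, signChanges_of_neg_of_pos
      (mul_neg_of_pos_of_neg hA (by nlinarith))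
      (mul_pos (mul_pos (by linarith) (by linarith)) hAW)]

open scoped Classical in
theorem schur_cohn_quadratic_zero_count (α β γ : ℂ) (ha : α ≠ 0)
    (h1 : ‖α‖ ≠ ‖γ‖)
    (h2 : (‖α‖ ^ 2 - ‖γ‖ ^ 2) ^ 2 ≠
      ‖α * (starRingEnd ℂ) β - β * (starRingEnd ℂ) γ‖ ^ 2) :
    Multiset.countP (fun z => ‖z‖ < 1)
        (Polynomial.roots
          (Polynomial.C α * Polynomial.X ^ 2 + Polynomial.C β * Polynomial.X +
            Polynomial.C γ)) =
      2 - ((if ‖α‖ ^ 2 - ‖γ‖ ^ 2 < 0 then 1 else 0) +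
        (if (‖α‖ ^ 2 - ‖γ‖ ^ 2) * ((‖α‖ ^ 2 - ‖γ‖ ^ 2) ^ 2 -
            ‖α * (starRingEnd ℂ) β - β * (starRingEnd ℂ) γ‖ ^ 2) < 0
          then 1 else 0)) := by
  obtain ⟨z₁, z₂, hroots⟩ := exists_roots_quadratic_eq_pair (b := β) (c := γ) ha
  obtain ⟨rfl, rfl⟩ := (roots_quadratic_eq_pair_iff_of_ne_zero ha).1 hroots
  have hn : ‖α‖ ^ 2 - ‖α * z₁ * z₂‖ ^ 2 ≠ 0 :=
    sub_ne_zero.2 fun h => h1 ((pow_left_inj₀ (norm_nonneg _) (norm_nonneg _) two_ne_zero).1 h)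
  rw [← sub_ne_zero, Complex.schurCohn_quadratic_discriminant_eq] at h2
  rw [Complex.norm_sq_sub_norm_mul_mul_sq] at hn
  rw [hroots, Multiset.countP_pair, Complex.schurCohn_quadratic_discriminant_eq,
    Complex.norm_sq_sub_norm_mul_mul_sq]
  simp only [← sq_lt_one_iff₀ (norm_nonneg _)]
  exact ite_lt_one_add_ite_lt_one_eq_two_sub_signChanges (by positivity) (by positivity)
    (by positivity) hn h2
end

section
/- For n ≥ 1 and 0 ≤ k ≤ n, the set Ω^n_k = { z ∈ ℂ^n : the monic polynomial t^n + z₁ t^{n−1} + ⋯ + z_n has no zeros on the unit circle and exactly k zeros (with multiplicity) in the open unit disk 𝔻 } is path-connected. -/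
/-!
Order the roots of a polynomial in `Ω^n_k` so that the `k` roots in the open unit disk `D` come
first. This exhibits `Ω^n_k` as the image of `D^k × E^(n-k)`, with `E = {w : 1 < ‖w‖}`, under the
map sending `(a, b)` to the lower coefficients of `∏ (t - aᵢ) * ∏ (t - bⱼ)`. That map is
continuous, and `D` and `E` are path-connected, hence so are the product and its image.
-/

open Polynomial Finset Metric Lagrange

theorem Multiset.exists_fin_map_eq {α : Type*} (m : Multiset α) {k : ℕ} (hk : card m = k) :
    ∃ a : Fin k → α, univ.val.map a = m := by
  subst hk
  refine ⟨fun i => m.toList[i.cast m.length_toList.symm], ?_⟩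
  rw [Fin.univ_val_map, List.ofFn_congr m.length_toList.symm]
  simp only [Fin.cast_cast, Fin.cast_eq_self]
  exact (congrArg _ (List.ofFn_get m.toList)).trans m.coe_toList

theorem isPathConnected_setOf_lt_norm {E : Type*} [NormedAddCommGroup E] [NormedSpace ℝ E]
    (h : 1 < Module.rank ℝ E) {r : ℝ} (hr : 0 ≤ r) : IsPathConnected {x : E | r < ‖x‖} := by
  have : {x : E | r < ‖x‖} = (fun p : ℝ × E => p.1 • p.2) '' (Set.Ioi r ×ˢ sphere 0 1) := by
    ext x
    constructor
    · intro hx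
      have hx0 : x ≠ 0 := norm_pos_iff.1 (hr.trans_lt hx)
      exact ⟨(‖x‖, ‖x‖⁻¹ • x), ⟨hx, by simp [norm_smul, hx0]⟩, by simp [smul_smul, hx0]⟩
    · rintro ⟨⟨t, u⟩, ⟨ht, hu⟩, rfl⟩
      simp_all [norm_smul, abs_of_pos (hr.trans_lt ht)]
  rw [this]
  exact ((convex_Ioi r).isPathConnected Set.nonempty_Ioi).prod
    (isPathConnected_sphere h 0 zero_le_one) |>.image (continuous_fst.smul continuous_snd)

namespace Polynomial

section CoeffVector

variable {R : Type*} [Semiring R] {n : ℕ}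

noncomputable def monicOfCoeffs (z : Fin n → R) : R[X] :=
  X ^ n + ∑ i : Fin n, C (z i) * X ^ (n - 1 - (i : ℕ))

def lowerCoeffs (n : ℕ) (p : R[X]) : Fin n → R := fun i => p.coeff (n - 1 - (i : ℕ))

theorem coeff_monicOfCoeffs (z : Fin n → R) (j : ℕ) :
    (monicOfCoeffs z).coeff j =
      if h : j < n then z (Fin.rev ⟨j, h⟩) else if j = n then 1 else 0 := by
  simp only [monicOfCoeffs, coeff_add, coeff_X_pow, finsetSum_coeff, coeff_C_mul, mul_ite,
    mul_one, mul_zero]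
  by_cases hj : j < n
  · rw [Finset.sum_eq_single (Fin.rev ⟨j, hj⟩) (fun i _ hi => if_neg ?_) (by simp),
      if_neg hj.ne, dif_pos hj, if_pos (by simp only [Fin.val_rev]; omega), zero_add]
    contrapose! hi
    simp only [Fin.ext_iff, Fin.val_rev]
    omega
  · rw [Finset.sum_eq_zero fun i _ => if_neg (by omega), add_zero, dif_neg hj]

theorem lowerCoeffs_monicOfCoeffs (z : Fin n → R) : lowerCoeffs n (monicOfCoeffs z) = z := by
  ext i
  rw [lowerCoeffs, coeff_monicOfCoeffs, dif_pos (by omega)]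
  congr
  simp only [Fin.ext_iff, Fin.val_rev]
  omega

theorem monicOfCoeffs_lowerCoeffs {p : R[X]} (hp : p.Monic) (hd : p.natDegree = n) :
    monicOfCoeffs (lowerCoeffs n p) = p := by
  ext j
  rw [coeff_monicOfCoeffs]
  split_ifs with hj hjn
  · simp only [lowerCoeffs, Fin.val_rev]
    congr 1
    omega
  · rw [hjn, ← hd, hp.coeff_natDegree]
  · exact (coeff_eq_zero_of_natDegree_lt (by omega)).symm

variable [Nontrivial R]

theorem natDegree_monicOfCoeffs (z : Fin n → R) : (monicOfCoeffs z).natDegree = n :=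
  natDegree_eq_of_le_of_coeff_ne_zero
    (natDegree_le_iff_coeff_eq_zero.2 fun j hj => by
      rw [coeff_monicOfCoeffs]; simp [(Nat.cast_lt.1 hj).ne', (Nat.cast_lt.1 hj).not_gt])
    (by simp [coeff_monicOfCoeffs])

theorem monic_monicOfCoeffs (z : Fin n → R) : (monicOfCoeffs z).Monic := by
  simp [Monic, leadingCoeff, natDegree_monicOfCoeffs, coeff_monicOfCoeffs]

end CoeffVector

section Continuity

variable {T R : Type*} [TopologicalSpace T] [TopologicalSpace R]

theorem continuous_coeff_mul [Semiring R] [IsTopologicalSemiring R] {f g : T → R[X]}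
    (hf : ∀ j, Continuous fun t => (f t).coeff j) (hg : ∀ j, Continuous fun t => (g t).coeff j)
    (j : ℕ) : Continuous fun t => (f t * g t).coeff j := by
  simp only [coeff_mul]
  exact continuous_finsetSum _ fun x _ => (hf x.1).mul (hg x.2)

theorem continuous_coeff_prod [CommSemiring R] [IsTopologicalSemiring R] {ι : Type*}
    (s : Finset ι) {f : ι → T → R[X]} (hf : ∀ i ∈ s, ∀ j, Continuous fun t => (f i t).coeff j)
    (j : ℕ) : Continuous fun t => (∏ i ∈ s, f i t).coeff j := by
  classical
  induction s using Finset.induction_on generalizing j with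
  | empty => simp only [prod_empty]; exact continuous_const
  | insert i s hi ih =>
    simp only [prod_insert hi]
    exact continuous_coeff_mul (hf i (mem_insert_self i s))
      (ih fun i hi => hf i (mem_insert_of_mem hi)) j

end Continuity

end Polynomial

namespace Lagrange

variable {ι α β : Type*}

theorem continuous_coeff_nodal {R : Type*} [CommRing R] [TopologicalSpace R]
    [IsTopologicalRing R] (s : Finset ι) (j : ℕ) :
    Continuous fun v : ι → R => (nodal s v).coeff j := by
  simp only [nodal_eq]
  refine continuous_coeff_prod s (fun i _ k => ?_) j
  simp only [coeff_sub, coeff_X, coeff_C]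
  exact continuous_const.sub
    (continuous_if_const _ (fun _ => continuous_apply i) fun _ => continuous_const)

section CommRing

variable {R : Type*} [CommRing R]

theorem nodal_eq_multiset_prod (s : Finset ι) (v : ι → R) :
    nodal s v = ((s.val.map v).map fun x => X - C x).prod := by
  rw [nodal_eq, Finset.prod_eq_multiset_prod, Multiset.map_map]
  rfl

theorem natDegree_nodal_mul_nodal [Nontrivial R] [Fintype α] [Fintype β] (a : α → R)
    (b : β → R) : (nodal univ a * nodal univ b).natDegree = Fintype.card α + Fintype.card β := by
  rw [nodal_monic.natDegree_mul nodal_monic, natDegree_nodal, natDegree_nodal, card_univ,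
    card_univ]

variable [IsDomain R]

theorem roots_nodal (s : Finset ι) (v : ι → R) : (nodal s v).roots = s.val.map v := by
  rw [nodal_eq_multiset_prod, roots_multiset_prod_X_sub_C]

theorem countP_roots_nodal_mul_nodal (P : R → Prop) [DecidablePred P] [Fintype α] [Fintype β]
    {a : α → R} {b : β → R} (ha : ∀ i, P (a i)) (hb : ∀ j, ¬P (b j)) :
    (nodal univ a * nodal univ b).roots.countP P = Fintype.card α := by
  rw [roots_mul (mul_ne_zero nodal_ne_zero nodal_ne_zero), roots_nodal, roots_nodal,
    Multiset.countP_add, Multiset.countP_eq_card.2 (Multiset.forall_mem_map_iff.2 fun i _ => ha i),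
    Multiset.countP_eq_zero.2 (Multiset.forall_mem_map_iff.2 fun j _ => hb j)]
  simp

end CommRing

theorem eval_nodal_mul_nodal_ne_zero {𝕜 : Type*} [NormedField 𝕜] {s : Finset α} {t : Finset β}
    {a : α → 𝕜} {b : β → 𝕜} (ha : ∀ i, ‖a i‖ < 1) (hb : ∀ j, 1 < ‖b j‖) {w : 𝕜}
    (hw : ‖w‖ = 1) : (nodal s a * nodal t b).eval w ≠ 0 := by
  rw [eval_mul]
  exact mul_ne_zero (eval_nodal_not_at_node fun i _ h => (ha i).ne (h ▸ hw))
    (eval_nodal_not_at_node fun j _ h => (hb j).ne' (h ▸ hw))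

end Lagrange

namespace Polynomial.Monic

theorem exists_nodal_mul_nodal_eq {F : Type*} [Field F] [IsAlgClosed F] (P : F → Prop)
    [DecidablePred P] {p : F[X]} (hp : p.Monic) {k m : ℕ} (hk : p.roots.countP P = k)
    (hm : p.natDegree = k + m) :
    ∃ (a : Fin k → F) (b : Fin m → F), (∀ i, P (a i)) ∧ (∀ j, ¬P (b j)) ∧
      nodal univ a * nodal univ b = p := by
  obtain ⟨a, ha⟩ := (p.roots.filter P).exists_fin_map_eq <| by
    rw [← Multiset.countP_eq_card_filter, hk]
  obtain ⟨b, hb⟩ := (p.roots.filter fun w => ¬P w).exists_fin_map_eq (k := m) <| by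
    have := Multiset.card_eq_countP_add_countP P p.roots
    rw [IsAlgClosed.card_roots_eq_natDegree, hm, hk] at this
    rw [← Multiset.countP_eq_card_filter]
    omega
  refine ⟨a, b, fun i => Multiset.of_mem_filter (ha ▸ Multiset.mem_map_of_mem a (mem_univ i)),
    fun j => Multiset.of_mem_filter (p := fun w => ¬P w)
      (hb ▸ Multiset.mem_map_of_mem b (mem_univ j)), ?_⟩
  rw [nodal_eq_multiset_prod, nodal_eq_multiset_prod, ha, hb, ← Multiset.prod_add,
    ← Multiset.map_add, Multiset.filter_add_not,
    prod_multiset_X_sub_C_of_monic_of_roots_card_eq hp IsAlgClosed.card_roots_eq_natDegree]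

theorem exists_nodal_mul_nodal_eq_of_eval_ne_zero {𝕜 : Type*} [NormedField 𝕜] [IsAlgClosed 𝕜]
    [DecidablePred fun w : 𝕜 => ‖w‖ < 1] {p : 𝕜[X]} (hp : p.Monic)
    (hcirc : ∀ w : 𝕜, ‖w‖ = 1 → p.eval w ≠ 0) {k m : ℕ}
    (hk : p.roots.countP (fun w => ‖w‖ < 1) = k) (hm : p.natDegree = k + m) :
    ∃ (a : Fin k → 𝕜) (b : Fin m → 𝕜), (∀ i, ‖a i‖ < 1) ∧ (∀ j, 1 < ‖b j‖) ∧
      nodal univ a * nodal univ b = p := by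
  obtain ⟨a, b, ha, hb, rfl⟩ := hp.exists_nodal_mul_nodal_eq _ hk hm
  refine ⟨a, b, ha, fun j => (not_lt.1 (hb j)).lt_of_ne fun h => hcirc _ h.symm ?_, rfl⟩
  rw [eval_mul, eval_nodal_at_node (mem_univ j), mul_zero]

end Polynomial.Monic

open scoped Classical in
theorem omega_n_k_pathConnected_general (n k : ℕ) (hk : k ≤ n) :
    IsPathConnected {z : Fin n → ℂ |
      (∀ w : ℂ, ‖w‖ = 1 →
        Polynomial.eval w (Polynomial.X ^ n +
          ∑ i : Fin n, Polynomial.C (z i) * Polynomial.X ^ (n - 1 - (i : ℕ))) ≠ 0) ∧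
      Multiset.countP (fun w => ‖w‖ < 1)
        (Polynomial.roots (Polynomial.X ^ n +
          ∑ i : Fin n, Polynomial.C (z i) * Polynomial.X ^ (n - 1 - (i : ℕ)))) = k} := by
  have hS : IsPathConnected ((Set.univ.pi fun _ : Fin k => ball (0 : ℂ) 1) ×ˢ
      (Set.univ.pi fun _ : Fin (n - k) => {w : ℂ | 1 < ‖w‖})) :=
    (IsPathConnected.pi fun _ => isPathConnected_ball one_pos).prod (IsPathConnected.pi fun _ =>
      isPathConnected_setOf_lt_norm (by rw [Complex.rank_real_complex]; norm_num) zero_le_one)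
  have hΦ : Continuous fun ab : (Fin k → ℂ) × (Fin (n - k) → ℂ) =>
      lowerCoeffs n (nodal univ ab.1 * nodal univ ab.2) :=
    continuous_pi fun i => continuous_coeff_mul
      (fun j => (continuous_coeff_nodal univ j).comp continuous_fst)
      (fun j => (continuous_coeff_nodal univ j).comp continuous_snd) _
  change IsPathConnected {z : Fin n → ℂ | (∀ w : ℂ, ‖w‖ = 1 → (monicOfCoeffs z).eval w ≠ 0) ∧
    (monicOfCoeffs z).roots.countP (fun w => ‖w‖ < 1) = k}
  convert hS.image hΦ using 1
  ext z
  constructor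
  · rintro ⟨hcirc, hcount⟩
    obtain ⟨a, b, ha, hb, hab⟩ := (monic_monicOfCoeffs z).exists_nodal_mul_nodal_eq_of_eval_ne_zero
      hcirc hcount (m := n - k) (by rw [natDegree_monicOfCoeffs]; omega)
    exact ⟨(a, b), ⟨fun i _ => mem_ball_zero_iff.2 (ha i), fun j _ => hb j⟩,
      (congrArg (lowerCoeffs n) hab).trans (lowerCoeffs_monicOfCoeffs z)⟩
  · rintro ⟨⟨a, b⟩, ⟨ha, hb⟩, rfl⟩
    simp only [Set.mem_univ_pi, mem_ball_zero_iff] at ha hb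
    have hd : (nodal univ a * nodal univ b).natDegree = n := by
      rw [natDegree_nodal_mul_nodal, Fintype.card_fin, Fintype.card_fin]; omega
    simp only [Set.mem_ofPred_eq, monicOfCoeffs_lowerCoeffs (nodal_monic.mul nodal_monic) hd]
    refine ⟨fun w hw => eval_nodal_mul_nodal_ne_zero ha hb hw, ?_⟩
    exact (countP_roots_nodal_mul_nodal (fun w => ‖w‖ < 1) ha fun j => (hb j).not_gt).trans
      (Fintype.card_fin k)

open scoped Classical in
theorem omega_n_k_pathConnected (n k : ℕ) (hn : 1 ≤ n) (hk : k ≤ n) :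
    IsPathConnected {z : Fin n → ℂ |
      (∀ w : ℂ, ‖w‖ = 1 →
        Polynomial.eval w (Polynomial.X ^ n +
          ∑ i : Fin n, Polynomial.C (z i) * Polynomial.X ^ (n - 1 - (i : ℕ))) ≠ 0) ∧
      Multiset.countP (fun w => ‖w‖ < 1)
        (Polynomial.roots (Polynomial.X ^ n +
          ∑ i : Fin n, Polynomial.C (z i) * Polynomial.X ^ (n - 1 - (i : ℕ)))) = k} :=
  omega_n_k_pathConnected_general n k hk
end
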